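/- arXiv:math-ph/0309005 — 8 statements merged into one kernel-verified Lean document; each statement's English description precedes it below -/
import Mathlib

section
/- Let g₂, g₃, B, e be complex numbers with 4e³ = g₂e + g₃. Then 36eB(4B² − 75g₂)² + (B² − 6eB + 45e² − 15g₂)(4B² − 60eB − 900e² + 75g₂)² = 16B⁶ + 360g₂B⁴ + 27000g₃B³ − 3375g₂²B² − 303750g₂g₃B − 84375g₂³ + 2278125g₃². Consequently the ℓ=3 Hermite–Krichever covering formula x₀ = e_γ + (1/36)(B² − 6e_γB + 45e_γ² − 15g₂)(B² − 15e_γB − 225e_γ² + (75/4)g₂)²/(B(B² − (75/4)g₂)²) is independent of the choice of branch point e_γ and equals (16B⁶ + 360g₂B⁴ + 27000g₃B³ − 3375g₂²B² − 303750g₂g₃B − 84375g₂³ + 2278125g₃²)/(36B(4B² − 75g₂)²). -/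
/-- If `e` is a branch point of `y² = 4x³ − g₂x − g₃` (i.e. `4e³ = g₂e + g₃`),
then
`36eB(4B² − 75g₂)² + (B² − 6eB + 45e² − 15g₂)(4B² − 60eB − 900e² + 75g₂)²
  = 16B⁶ + 360g₂B⁴ + 27000g₃B³ − 3375g₂²B² − 303750g₂g₃B − 84375g₂³ + 2278125g₃²`.
Consequently the ℓ=3 Hermite–Krichever covering formula
`x₀ = e + (1/36)(B² − 6eB + 45e² − 15g₂)(B² − 15eB − 225e² + (75/4)g₂)²/(B(B² − (75/4)g₂)²)`
is independent of the choice of branch point `e` and equals the displayed rational function. -/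
theorem lame_HK_covering_l3_branch_independent (g₂ g₃ B e : ℂ)
    (he : 4 * e ^ 3 = g₂ * e + g₃) :
    36 * e * B * (4 * B ^ 2 - 75 * g₂) ^ 2
      + (B ^ 2 - 6 * e * B + 45 * e ^ 2 - 15 * g₂)
        * (4 * B ^ 2 - 60 * e * B - 900 * e ^ 2 + 75 * g₂) ^ 2
      = 16 * B ^ 6 + 360 * g₂ * B ^ 4 + 27000 * g₃ * B ^ 3 - 3375 * g₂ ^ 2 * B ^ 2
        - 303750 * g₂ * g₃ * B - 84375 * g₂ ^ 3 + 2278125 * g₃ ^ 2 ∧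
    (B * (4 * B ^ 2 - 75 * g₂) ≠ 0 →
      e + (B ^ 2 - 6 * e * B + 45 * e ^ 2 - 15 * g₂)
            * (B ^ 2 - 15 * e * B - 225 * e ^ 2 + (75 / 4) * g₂) ^ 2
          / (36 * (B * (B ^ 2 - (75 / 4) * g₂) ^ 2))
        = (16 * B ^ 6 + 360 * g₂ * B ^ 4 + 27000 * g₃ * B ^ 3 - 3375 * g₂ ^ 2 * B ^ 2
            - 303750 * g₂ * g₃ * B - 84375 * g₂ ^ 3 + 2278125 * g₃ ^ 2)
          / (36 * B * (4 * B ^ 2 - 75 * g₂) ^ 2)) := by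
  have eq1 : 36 * e * B * (4 * B ^ 2 - 75 * g₂) ^ 2
      + (B ^ 2 - 6 * e * B + 45 * e ^ 2 - 15 * g₂)
        * (4 * B ^ 2 - 60 * e * B - 900 * e ^ 2 + 75 * g₂) ^ 2
      = 16 * B ^ 6 + 360 * g₂ * B ^ 4 + 27000 * g₃ * B ^ 3 - 3375 * g₂ ^ 2 * B ^ 2
        - 303750 * g₂ * g₃ * B - 84375 * g₂ ^ 3 + 2278125 * g₃ ^ 2 := by
    linear_combination (9112500 * e ^ 3 - 2278125 * e * g₂ + 27000 * B ^ 3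
      - 303750 * B * g₂ + 2278125 * g₃) * he
  refine ⟨eq1, fun h => ?_⟩
  have hB : B ≠ 0 := fun h0 => h (by rw [h0]; ring)
  have hD : 4 * B ^ 2 - 75 * g₂ ≠ 0 := fun h0 => h (by rw [h0]; ring)
  have hden1 : (36 : ℂ) * (B * (B ^ 2 - 75 / 4 * g₂) ^ 2) ≠ 0 := by
    have : B ^ 2 - 75 / 4 * g₂ ≠ 0 := fun h0 => hD (by linear_combination 4 * h0)
    exact mul_ne_zero (by norm_num) (mul_ne_zero hB (pow_ne_zero 2 this))
  have hden2 : (36 : ℂ) * B * (4 * B ^ 2 - 75 * g₂) ^ 2 ≠ 0 :=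
    mul_ne_zero (mul_ne_zero (by norm_num) hB) (pow_ne_zero 2 hD)
  rw [add_div' _ _ _ hden1, div_eq_div_iff hden1 hden2]
  linear_combination (9 / 4 * B * (4 * B ^ 2 - 75 * g₂) ^ 2) * eq1
end

section
/- Let g₂, g₃ be complex numbers, and set x₀(B) = (B³ + 27g₃)/(9(B² − 3g₂)) and w(B) = 2(B³ − 9g₂B − 54g₃)/(27(B² − 3g₂)²). Then for every B ∈ ℂ with B² ≠ 3g₂, one has w(B)² · 𝖫₂(B) = 4x₀(B)³ − g₂x₀(B) − g₃, where 𝖫₂(B) = (B² − 3g₂)(B³ − (9/4)g₂B + (27/4)g₃). In other words, if (B, ν) lies on the ℓ=2 Lamé spectral curve ν² = 𝖫₂(B), then the image point (x₀, y₀) = (x₀(B), w(B)ν) of the Hermite–Krichever covering π₂ lies on the elliptic curve y₀² = 4x₀³ − g₂x₀ − g₃. -/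
/-! With `D = B² − 3g₂`, all three rational functions have powers of `D` as denominators, and
after clearing them the claim becomes the polynomial identity
`(B³ − 9g₂B − 54g₃)² (4B³ − 9g₂B + 27g₃) = 4P³ − 81g₂PD² − 729g₃D³`, `P = B³ + 27g₃`.
On the spectral curve, `(w ν)² = w² 𝖫₂`. -/

theorem lame_two_cleared_identity {R : Type*} [CommRing R] (g₂ g₃ B : R) :
    (B ^ 3 - 9 * g₂ * B - 54 * g₃) ^ 2 * (4 * B ^ 3 - 9 * g₂ * B + 27 * g₃)
      = 4 * (B ^ 3 + 27 * g₃) ^ 3 - 81 * g₂ * (B ^ 3 + 27 * g₃) * (B ^ 2 - 3 * g₂) ^ 2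
        - 729 * g₃ * (B ^ 2 - 3 * g₂) ^ 3 := by
  ring

theorem weierstrass_eq_of_cleared_identity {K : Type*} [Field K] [CharZero K]
    {g₂ g₃ P Q R D : K} (hD : D ≠ 0)
    (h : Q ^ 2 * (4 * R) = 4 * P ^ 3 - 81 * g₂ * P * D ^ 2 - 729 * g₃ * D ^ 3) :
    (2 * Q / (27 * D ^ 2)) ^ 2 * (D * R)
      = 4 * (P / (9 * D)) ^ 3 - g₂ * (P / (9 * D)) - g₃ := by
  field_simp
  linear_combination (729 : K) * h

/-- With `x₀(B) = (B³ + 27g₃)/(9(B² − 3g₂))` and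
`w(B) = 2(B³ − 9g₂B − 54g₃)/(27(B² − 3g₂)²)`, for every `B` with `B² ≠ 3g₂` one has
`w(B)² ⬝ 𝖫₂(B) = 4x₀(B)³ − g₂x₀(B) − g₃` where
`𝖫₂(B) = (B² − 3g₂)(B³ − (9/4)g₂B + (27/4)g₃)`; hence if `(B, ν)` lies on the ℓ=2 Lamé
spectral curve `ν² = 𝖫₂(B)` then `(x₀(B), w(B)ν)` lies on `y² = 4x³ − g₂x − g₃`. -/
theorem lame_HK_covering_l2_lands_on_elliptic_curve (g₂ g₃ : ℂ) (B : ℂ)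
    (hB : B ^ 2 ≠ 3 * g₂) :
    (2 * (B ^ 3 - 9 * g₂ * B - 54 * g₃) / (27 * (B ^ 2 - 3 * g₂) ^ 2)) ^ 2
        * ((B ^ 2 - 3 * g₂) * (B ^ 3 - (9 / 4) * g₂ * B + (27 / 4) * g₃))
      = 4 * ((B ^ 3 + 27 * g₃) / (9 * (B ^ 2 - 3 * g₂))) ^ 3
        - g₂ * ((B ^ 3 + 27 * g₃) / (9 * (B ^ 2 - 3 * g₂))) - g₃ ∧
    ∀ ν : ℂ, ν ^ 2 = (B ^ 2 - 3 * g₂) * (B ^ 3 - (9 / 4) * g₂ * B + (27 / 4) * g₃) →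
      (2 * (B ^ 3 - 9 * g₂ * B - 54 * g₃) / (27 * (B ^ 2 - 3 * g₂) ^ 2) * ν) ^ 2
        = 4 * ((B ^ 3 + 27 * g₃) / (9 * (B ^ 2 - 3 * g₂))) ^ 3
          - g₂ * ((B ^ 3 + 27 * g₃) / (9 * (B ^ 2 - 3 * g₂))) - g₃ := by
  refine (fun on_curve => ⟨on_curve, fun ν hν => by rw [mul_pow, hν, on_curve]⟩) ?_
  exact weierstrass_eq_of_cleared_identity (sub_ne_zero.mpr hB)
    (by linear_combination lame_two_cleared_identity g₂ g₃ B)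
end

section
/- Let g₂, g₃ be complex numbers, and set x₀(B) = (16B⁶ + 360g₂B⁴ + 27000g₃B³ − 3375g₂²B² − 303750g₂g₃B − 84375g₂³ + 2278125g₃²)/(36B(4B² − 75g₂)²) and w(B) = (16B⁶ − 1800g₂B⁴ − 54000g₃B³ − 16875g₂²B² + 421875g₂³ − 11390625g₃²)/(27B²(4B² − 75g₂)³). Then for every B ∈ ℂ with B(4B² − 75g₂) ≠ 0, one has w(B)² · 𝖫₃(B) = 4x₀(B)³ − g₂x₀(B) − g₃, where 𝖫₃(B) = B(B⁶ − (63/2)g₂B⁴ + (297/2)g₃B³ + (4185/16)g₂²B² − (18225/8)g₂g₃B − (3375/16)g₂³ + (91125/16)g₃²). In other words, if (B, ν) lies on the ℓ=3 Lamé spectral curve ν² = 𝖫₃(B), then the image point (x₀(B), w(B)ν) of the Hermite–Krichever covering π₃ lies on the elliptic curve y² = 4x³ − g₂x − g₃. -/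
/-!
Multiplying by the denominators `27B²(4B² − 75g₂)³` of `w` and `36B(4B² − 75g₂)²` of `x₀` turns
`w² 𝖫₃ = 4x₀³ − g₂x₀ − g₃` into a polynomial identity in `B, g₂, g₃`. On the spectral curve,
`(wν)² = w² 𝖫₃`.
-/

namespace LameHermiteKrichever

variable {K : Type*} [Field K]

def lame3 (g₂ g₃ B : K) : K :=
  B * (B ^ 6 - (63 / 2) * g₂ * B ^ 4 + (297 / 2) * g₃ * B ^ 3
    + (4185 / 16) * g₂ ^ 2 * B ^ 2 - (18225 / 8) * g₂ * g₃ * B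
    - (3375 / 16) * g₂ ^ 3 + (91125 / 16) * g₃ ^ 2)

def x₀Num (g₂ g₃ B : K) : K :=
  16 * B ^ 6 + 360 * g₂ * B ^ 4 + 27000 * g₃ * B ^ 3 - 3375 * g₂ ^ 2 * B ^ 2
    - 303750 * g₂ * g₃ * B - 84375 * g₂ ^ 3 + 2278125 * g₃ ^ 2

def wNum (g₂ g₃ B : K) : K :=
  16 * B ^ 6 - 1800 * g₂ * B ^ 4 - 54000 * g₃ * B ^ 3 - 16875 * g₂ ^ 2 * B ^ 2
    + 421875 * g₂ ^ 3 - 11390625 * g₃ ^ 2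

def x₀ (g₂ g₃ B : K) : K :=
  x₀Num g₂ g₃ B / (36 * B * (4 * B ^ 2 - 75 * g₂) ^ 2)

def w (g₂ g₃ B : K) : K :=
  wNum g₂ g₃ B / (27 * B ^ 2 * (4 * B ^ 2 - 75 * g₂) ^ 3)

theorem wNum_sq_mul_lame3 [CharZero K] (g₂ g₃ B : K) :
    64 * wNum g₂ g₃ B ^ 2 * lame3 g₂ g₃ B
      = B * (4 * x₀Num g₂ g₃ B ^ 3 - 1296 * g₂ * B ^ 2 * (4 * B ^ 2 - 75 * g₂) ^ 4 * x₀Num g₂ g₃ B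
        - 46656 * g₃ * B ^ 3 * (4 * B ^ 2 - 75 * g₂) ^ 6) := by
  simp only [wNum, lame3, x₀Num]
  ring

theorem w_sq_mul_lame3 [CharZero K] {g₂ g₃ B : K} (hB : B * (4 * B ^ 2 - 75 * g₂) ≠ 0) :
    w g₂ g₃ B ^ 2 * lame3 g₂ g₃ B = 4 * x₀ g₂ g₃ B ^ 3 - g₂ * x₀ g₂ g₃ B - g₃ := by
  have key := wNum_sq_mul_lame3 g₂ g₃ B
  rw [w, x₀]
  -- as an atom, `4B² − 75g₂` is cancelled by `field_simp` instead of being expanded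
  generalize 4 * B ^ 2 - 75 * g₂ = Q at hB key ⊢
  obtain ⟨hB₀, hQ⟩ := mul_ne_zero_iff.mp hB
  field_simp
  linear_combination 729 * key

theorem w_mul_sq_eq_weierstrass [CharZero K] {g₂ g₃ B ν : K} (hB : B * (4 * B ^ 2 - 75 * g₂) ≠ 0)
    (hν : ν ^ 2 = lame3 g₂ g₃ B) :
    (w g₂ g₃ B * ν) ^ 2 = 4 * x₀ g₂ g₃ B ^ 3 - g₂ * x₀ g₂ g₃ B - g₃ := by
  rw [mul_pow, hν, w_sq_mul_lame3 hB]

end LameHermiteKrichever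

/-- With
`x₀(B) = (16B⁶ + 360g₂B⁴ + 27000g₃B³ − 3375g₂²B² − 303750g₂g₃B − 84375g₂³ + 2278125g₃²)
          /(36B(4B² − 75g₂)²)` and
`w(B) = (16B⁶ − 1800g₂B⁴ − 54000g₃B³ − 16875g₂²B² + 421875g₂³ − 11390625g₃²)
          /(27B²(4B² − 75g₂)³)`,
for every `B` with `B(4B² − 75g₂) ≠ 0` one has `w(B)² ⬝ 𝖫₃(B) = 4x₀(B)³ − g₂x₀(B) − g₃`,
where `𝖫₃(B) = B(B⁶ − (63/2)g₂B⁴ + (297/2)g₃B³ + (4185/16)g₂²B² − (18225/8)g₂g₃B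
− (3375/16)g₂³ + (91125/16)g₃²)`; hence if `(B, ν)` lies on the ℓ=3 Lamé spectral curve
`ν² = 𝖫₃(B)` then `(x₀(B), w(B)ν)` lies on `y² = 4x³ − g₂x − g₃`. -/
theorem lame_HK_covering_l3_lands_on_elliptic_curve (g₂ g₃ : ℂ) (B : ℂ)
    (hB : B * (4 * B ^ 2 - 75 * g₂) ≠ 0) :
    ((16 * B ^ 6 - 1800 * g₂ * B ^ 4 - 54000 * g₃ * B ^ 3 - 16875 * g₂ ^ 2 * B ^ 2
        + 421875 * g₂ ^ 3 - 11390625 * g₃ ^ 2)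
      / (27 * B ^ 2 * (4 * B ^ 2 - 75 * g₂) ^ 3)) ^ 2
      * (B * (B ^ 6 - (63 / 2) * g₂ * B ^ 4 + (297 / 2) * g₃ * B ^ 3
          + (4185 / 16) * g₂ ^ 2 * B ^ 2 - (18225 / 8) * g₂ * g₃ * B
          - (3375 / 16) * g₂ ^ 3 + (91125 / 16) * g₃ ^ 2))
      = 4 * ((16 * B ^ 6 + 360 * g₂ * B ^ 4 + 27000 * g₃ * B ^ 3 - 3375 * g₂ ^ 2 * B ^ 2
              - 303750 * g₂ * g₃ * B - 84375 * g₂ ^ 3 + 2278125 * g₃ ^ 2)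
            / (36 * B * (4 * B ^ 2 - 75 * g₂) ^ 2)) ^ 3
        - g₂ * ((16 * B ^ 6 + 360 * g₂ * B ^ 4 + 27000 * g₃ * B ^ 3 - 3375 * g₂ ^ 2 * B ^ 2
                  - 303750 * g₂ * g₃ * B - 84375 * g₂ ^ 3 + 2278125 * g₃ ^ 2)
              / (36 * B * (4 * B ^ 2 - 75 * g₂) ^ 2))
        - g₃ ∧
    ∀ ν : ℂ,
      ν ^ 2 = B * (B ^ 6 - (63 / 2) * g₂ * B ^ 4 + (297 / 2) * g₃ * B ^ 3
          + (4185 / 16) * g₂ ^ 2 * B ^ 2 - (18225 / 8) * g₂ * g₃ * B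
          - (3375 / 16) * g₂ ^ 3 + (91125 / 16) * g₃ ^ 2) →
      ((16 * B ^ 6 - 1800 * g₂ * B ^ 4 - 54000 * g₃ * B ^ 3 - 16875 * g₂ ^ 2 * B ^ 2
          + 421875 * g₂ ^ 3 - 11390625 * g₃ ^ 2)
        / (27 * B ^ 2 * (4 * B ^ 2 - 75 * g₂) ^ 3) * ν) ^ 2
        = 4 * ((16 * B ^ 6 + 360 * g₂ * B ^ 4 + 27000 * g₃ * B ^ 3 - 3375 * g₂ ^ 2 * B ^ 2
                - 303750 * g₂ * g₃ * B - 84375 * g₂ ^ 3 + 2278125 * g₃ ^ 2)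
              / (36 * B * (4 * B ^ 2 - 75 * g₂) ^ 2)) ^ 3
          - g₂ * ((16 * B ^ 6 + 360 * g₂ * B ^ 4 + 27000 * g₃ * B ^ 3 - 3375 * g₂ ^ 2 * B ^ 2
                    - 303750 * g₂ * g₃ * B - 84375 * g₂ ^ 3 + 2278125 * g₃ ^ 2)
                / (36 * B * (4 * B ^ 2 - 75 * g₂) ^ 2))
          - g₃ :=
  ⟨LameHermiteKrichever.w_sq_mul_lame3 hB, fun _ hν => LameHermiteKrichever.w_mul_sq_eq_weierstrass hB hν⟩
end

section
/- Let g₂, g₃ be complex numbers and let x₀(B) = (B³ + 27g₃)/(9(B² − 3g₂)) and w(B) = 2(B³ − 9g₂B − 54g₃)/(27(B² − 3g₂)²). Then for every B ∈ ℂ with B² ≠ 3g₂, the complex derivative of x₀ at B equals (3/2)B · w(B). Consequently the pullback under the ℓ=2 covering of the holomorphic differential dx₀/y₀ on the elliptic curve is the differential (3/2)B dB/ν on the spectral curve ν² = 𝖫₂(B), giving the hyperelliptic-to-elliptic reduction ∫ (3/2)B dB/√((B² − 3g₂)(B³ − (9/4)g₂B + (27/4)g₃)) = ∫ dx₀/√(4x₀³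 − g₂x₀ − g₃). -/
theorem hasDerivAt_cubic_div_quadratic {𝕜 : Type*} [NontriviallyNormedField 𝕜]
    (a c B : 𝕜) (hB : B ^ 2 ≠ a) :
    HasDerivAt (fun z : 𝕜 => (z ^ 3 + c) / (z ^ 2 - a))
      (B * (B ^ 3 - 3 * a * B - 2 * c) / (B ^ 2 - a) ^ 2) B := by
  have hnum : HasDerivAt (fun z : 𝕜 => z ^ 3 + c) (3 * B ^ 2) B := by
    simpa using (hasDerivAt_pow 3 B).add_const c
  have hden : HasDerivAt (fun z : 𝕜 => z ^ 2 - a) (2 * B) B := by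
    simpa using (hasDerivAt_pow 2 B).sub_const a
  refine (hnum.div hden (sub_ne_zero.mpr hB)).congr_deriv ?_
  congr 1
  ring

/-- For `x₀(B) = (B³ + 27g₃)/(9(B² − 3g₂))` and
`w(B) = 2(B³ − 9g₂B − 54g₃)/(27(B² − 3g₂)²)`, at every `B` with `B² ≠ 3g₂` the complex
derivative of `x₀` equals `(3/2)B ⬝ w(B)`.  This is the ℓ=2 hyperelliptic-to-elliptic
reduction: the pullback of the holomorphic differential `dx₀/y₀` under the ℓ=2
Hermite–Krichever covering is `(3/2)B dB/ν` on the spectral curve `ν² = 𝖫₂(B)`. -/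
theorem lame_HK_reduction_l2_deriv (g₂ g₃ B : ℂ) (hB : B ^ 2 ≠ 3 * g₂) :
    HasDerivAt (fun z : ℂ => (z ^ 3 + 27 * g₃) / (9 * (z ^ 2 - 3 * g₂)))
      ((3 / 2) * B * (2 * (B ^ 3 - 9 * g₂ * B - 54 * g₃) / (27 * (B ^ 2 - 3 * g₂) ^ 2)))
      B := by
  have hx₀ : (fun z : ℂ => (z ^ 3 + 27 * g₃) / (9 * (z ^ 2 - 3 * g₂))) =
      fun z => (z ^ 3 + 27 * g₃) / (z ^ 2 - 3 * g₂) / 9 := by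
    funext z
    exact div_mul_eq_div_div_swap _ _ _
  rw [hx₀]
  refine ((hasDerivAt_cubic_div_quadratic (3 * g₂) (27 * g₃) B hB).div_const 9).congr_deriv ?_
  field_simp
  ring
end

section
/- Let g₂, g₃ be complex numbers with g₂³ − 27g₃² ≠ 0. Then the quintic polynomial 𝖫₂(B) = (B² − 3g₂)(B³ − (9/4)g₂B + (27/4)g₃) has a repeated complex root if and only if g₂ = 0 (equivalently, if and only if the Klein invariant J = g₂³/(g₂³ − 27g₃²) equals 0). In particular, as the parameters vary with g₂³ − 27g₃² ≠ 0, at most two of the 2ℓ+1 = 5 band-edge values of B can coincide, and this happens exactly at the root J = 0 of the ℓ=2 Type-I Cohn polynomial. -/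
open Polynomial

/-- Assuming `g₂³ − 27g₃² ≠ 0`, the quintic
`𝖫₂(B) = (B² − 3g₂)(B³ − (9/4)g₂B + (27/4)g₃)` has a repeated complex root if and only
if `g₂ = 0`, equivalently if and only if the Klein invariant `J = g₂³/(g₂³ − 27g₃²)`
equals `0` (the root of the ℓ=2 Type-I Cohn polynomial). -/
theorem lame_l2_band_edge_degeneracy_iff (g₂ g₃ : ℂ) (hΔ : g₂ ^ 3 - 27 * g₃ ^ 2 ≠ 0) :
    ((∃ z : ℂ, (X - C z) ^ 2 ∣
        ((X ^ 2 - C (3 * g₂)) * (X ^ 3 - C ((9 / 4) * g₂) * X + C ((27 / 4) * g₃)))) ↔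
      g₂ = 0) ∧
    (g₂ = 0 ↔ g₂ ^ 3 / (g₂ ^ 3 - 27 * g₃ ^ 2) = 0) := by
  constructor
  · constructor
    · rintro ⟨z, q, hq⟩
      -- eval at z
      have h1 : (z ^ 2 - 3 * g₂) * (z ^ 3 - 9 / 4 * g₂ * z + 27 / 4 * g₃) = 0 := by
        have h := congrArg (eval z) hq
        simp only [eval_mul, eval_pow, eval_add, eval_sub, eval_X, eval_C, sub_self,
          ne_eq, OfNat.ofNat_ne_zero, not_false_eq_true, zero_pow, zero_mul] at h
        linear_combination h
      have h2 : 2 * z * (z ^ 3 - 9 / 4 * g₂ * z + 27 / 4 * g₃)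
          + (z ^ 2 - 3 * g₂) * (3 * z ^ 2 - 9 / 4 * g₂) = 0 := by
        have := congrArg (fun p => (derivative p).eval z) hq
        simp [derivative_mul, derivative_pow, eval_mul, eval_pow, eval_add, eval_sub] at this
        linear_combination this
      rcases mul_eq_zero.1 h1 with hA | hB
      · -- z^2 = 3 g₂
        have h2' : 2 * z * (z ^ 3 - 9 / 4 * g₂ * z + 27 / 4 * g₃) = 0 := by
          linear_combination h2 - (3 * z ^ 2 - 9 / 4 * g₂) * hA
        rcases mul_eq_zero.1 h2' with hz | hc
        · have hz0 : z = 0 := by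
            rcases mul_eq_zero.1 hz with h | h
            · exact absurd h (by norm_num)
            · exact h
          subst hz0
          linear_combination (-1/3 : ℂ) * hA
        · exfalso
          apply hΔ
          linear_combination ((4/9) * (g₂*z - 9*g₃)) * hc + (-(4/9)*(g₂*z - 9*g₃)*z - (1/3)*g₂^2) * hA
      · -- cubic = 0
        have h2' : (z ^ 2 - 3 * g₂) * (3 * z ^ 2 - 9 / 4 * g₂) = 0 := by
          linear_combination h2 - 2 * z * hB
        rcases mul_eq_zero.1 h2' with hA | hC
        · -- both z^2 = 3g₂ and cubic = 0 : same contradiction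
          exfalso
          apply hΔ
          linear_combination ((4/9) * (g₂*z - 9*g₃)) * hB + (-(4/9)*(g₂*z - 9*g₃)*z - (1/3)*g₂^2) * hA
        · exfalso
          apply hΔ
          -- e1' : z^2 - 3/4 g₂ = (1/3) * hC
          linear_combination (-(8/9)*(g₂*z + 9/2*g₃)) * hB + ((8/27)*(g₂*z + 9/2*g₃)*z - (4/9)*g₂^2) * hC
    · intro hg
      refine ⟨0, ?_⟩
      rw [hg]
      simp only [C_0, sub_zero, mul_zero, map_zero]
      exact dvd_mul_right _ _
  · constructor
    · intro h; rw [h]; simp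
    · intro h
      rcases div_eq_zero_iff.1 h with h | h
      · exact pow_eq_zero_iff (by norm_num) |>.1 h
      · exact absurd h hΔ
end

section
/- Let g₂, g₃ be complex numbers with g₂³ − 27g₃² ≠ 0, and let e₁, e₂, e₃ ∈ ℂ be such that 4X³ − g₂X − g₃ = 4(X − e₁)(X − e₂)(X − e₃) as polynomials. Then the sextic polynomial ∏_{γ=1}^{3} (B² − 6e_γB + 45e_γ² − 15g₂) in B has a repeated complex root if and only if 5g₂³ = 27g₃², i.e. if and only if the Klein invariant J = g₂³/(g₂³ − 27g₃²) satisfies 4J + 1 = 0. -/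
open Polynomial

/-- If two of the ℓ=3 Type-II spectral quadratics (with the Vieta substitution
`g₂ = 4(p²+pq+q²)` valid for any pair of roots of the cubic) share a root `z`,
then the two branch points coincide. -/
lemma lame_aux_shared_root (p q z : ℂ) (hne : p - q ≠ 0)
    (h1 : z^2 - 6*p*z + (45*p^2 - 60*(p^2+p*q+q^2)) = 0)
    (h2 : z^2 - 6*q*z + (45*q^2 - 60*(p^2+p*q+q^2)) = 0) : False := by
  have hd2 : (p-q)*(2*z-15*(p+q)) = 0 := by
    linear_combination (-(1:ℂ)/3)*h1 + ((1:ℂ)/3)*h2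
  rcases mul_eq_zero.mp hd2 with h | h
  · exact hne h
  · have hz : z = 15*(p+q)/2 := by linear_combination h/2
    subst hz
    have hsq : (p-q)*(p-q) = 0 := by linear_combination (-(4:ℂ)/15)*h1
    exact hne (mul_self_eq_zero.mp hsq)

/-- Let `g₂³ − 27g₃² ≠ 0` and let `e₁, e₂, e₃` be the roots of
`4X³ − g₂X − g₃`, i.e. `4X³ − g₂X − g₃ = 4(X − e₁)(X − e₂)(X − e₃)` as polynomials.
Then the sextic `∏_{γ=1}^{3} (B² − 6e_γB + 45e_γ² − 15g₂)` (product of the ℓ=3 Type-II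
Lamé spectral polynomials) has a repeated complex root if and only if `5g₂³ = 27g₃²`,
i.e. if and only if the Klein invariant `J = g₂³/(g₂³ − 27g₃²)` satisfies `4J + 1 = 0`. -/
theorem lame_l3_typeII_degeneracy_iff (g₂ g₃ e₁ e₂ e₃ : ℂ)
    (hΔ : g₂ ^ 3 - 27 * g₃ ^ 2 ≠ 0)
    (hroots : (4 : ℂ[X]) * X ^ 3 - C g₂ * X - C g₃
      = 4 * (X - C e₁) * (X - C e₂) * (X - C e₃)) :
    ((∃ z : ℂ, (X - C z) ^ 2 ∣
        ((X ^ 2 - C (6 * e₁) * X + C (45 * e₁ ^ 2 - 15 * g₂)) *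
         (X ^ 2 - C (6 * e₂) * X + C (45 * e₂ ^ 2 - 15 * g₂)) *
         (X ^ 2 - C (6 * e₃) * X + C (45 * e₃ ^ 2 - 15 * g₂)))) ↔
      5 * g₂ ^ 3 = 27 * g₃ ^ 2) ∧
    (5 * g₂ ^ 3 = 27 * g₃ ^ 2 ↔ 4 * (g₂ ^ 3 / (g₂ ^ 3 - 27 * g₃ ^ 2)) + 1 = 0) := by
  refine ⟨?_, ?_⟩
  · -- main equivalence
    -- Vieta relations
    have hv0 := congrArg (eval 0) hroots
    have hv1 := congrArg (eval 1) hroots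
    have hvm := congrArg (eval (-1)) hroots
    simp only [eval_sub, eval_mul, eval_add, eval_pow, eval_X, eval_C, eval_ofNat,
      eval_neg, eval_one, eval_zero] at hv0 hv1 hvm
    have hg₃ : g₃ = 4*(e₁*e₂*e₃) := by linear_combination -hv0
    have hs : e₃ = -e₁ - e₂ := by
      linear_combination ((1:ℂ)/8)*hv1 + ((1:ℂ)/8)*hvm - ((1:ℂ)/4)*hv0
    have hg₂ : g₂ = -4*(e₁*e₂+e₁*e₃+e₂*e₃) := by
      linear_combination (-(1:ℂ)/2)*hv1 + ((1:ℂ)/2)*hvm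
    subst hs
    subst hg₂
    subst hg₃
    -- distinctness of the branch points, from Δ ≠ 0
    have h12 : e₁ - e₂ ≠ 0 := by
      intro h; apply hΔ
      have h' : e₂ = e₁ := by linear_combination -h
      subst h'; ring
    have h13 : 2*e₁ + e₂ ≠ 0 := by
      intro h; apply hΔ
      have h' : e₂ = -2*e₁ := by linear_combination h
      subst h'; ring
    have h23 : e₁ + 2*e₂ ≠ 0 := by
      intro h; apply hΔ
      have h' : e₁ = -2*e₂ := by linear_combination h
      subst h'; ring
    constructor
    · -- repeated root ⇒ 5g₂³ = 27g₃²
      rintro ⟨z, r, hr⟩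
      have h0 := congrArg (eval z) hr
      have hd := congrArg (eval z) (congrArg derivative hr)
      simp only [eval_mul, eval_add, eval_sub, eval_pow, eval_X, eval_C, eval_ofNat,
        derivative_mul, derivative_sub, derivative_add, derivative_pow, derivative_X,
        derivative_C, derivative_one, eval_one, eval_zero,
        sub_self, mul_zero, zero_mul, add_zero, zero_add, mul_one, one_mul] at h0 hd
      have hQ : (z^2 - 6*e₁*z + (45*e₁^2 - 60*(e₁^2+e₁*e₂+e₂^2)))
          * (z^2 - 6*e₂*z + (45*e₂^2 - 60*(e₁^2+e₁*e₂+e₂^2)))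
          * (z^2 + 6*(e₁+e₂)*z + (45*(e₁+e₂)^2 - 60*(e₁^2+e₁*e₂+e₂^2))) = 0 := by
        linear_combination h0
      have hD : (2*z-6*e₁)
            * (z^2 - 6*e₂*z + (45*e₂^2 - 60*(e₁^2+e₁*e₂+e₂^2)))
            * (z^2 + 6*(e₁+e₂)*z + (45*(e₁+e₂)^2 - 60*(e₁^2+e₁*e₂+e₂^2)))
          + (z^2 - 6*e₁*z + (45*e₁^2 - 60*(e₁^2+e₁*e₂+e₂^2)))
            * (2*z-6*e₂)
            * (z^2 + 6*(e₁+e₂)*z + (45*(e₁+e₂)^2 - 60*(e₁^2+e₁*e₂+e₂^2)))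
          + (z^2 - 6*e₁*z + (45*e₁^2 - 60*(e₁^2+e₁*e₂+e₂^2)))
            * (z^2 - 6*e₂*z + (45*e₂^2 - 60*(e₁^2+e₁*e₂+e₂^2)))
            * (2*z+6*(e₁+e₂)) = 0 := by
        linear_combination hd
      rcases mul_eq_zero.mp hQ with h' | hZ3
      · rcases mul_eq_zero.mp h' with hZ1 | hZ2
        · -- Z1 = 0
          have hD1 : (2*z-6*e₁) * ((z^2 - 6*e₂*z + (45*e₂^2 - 60*(e₁^2+e₁*e₂+e₂^2)))
              * (z^2 + 6*(e₁+e₂)*z + (45*(e₁+e₂)^2 - 60*(e₁^2+e₁*e₂+e₂^2)))) = 0 := by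
            linear_combination hD - ((2*z-6*e₂)
              * (z^2 + 6*(e₁+e₂)*z + (45*(e₁+e₂)^2 - 60*(e₁^2+e₁*e₂+e₂^2)))
              + (z^2 - 6*e₂*z + (45*e₂^2 - 60*(e₁^2+e₁*e₂+e₂^2)))
              * (2*z+6*(e₁+e₂)))*hZ1
          rcases mul_eq_zero.mp hD1 with hz1 | h''
          · have hz' : z = 3*e₁ := by linear_combination hz1/2
            subst hz'
            linear_combination ((-1:ℂ)/12) * (20*e₁^2+20*e₁*e₂+8*e₂^2)
              * (8*e₁^2-4*e₁*e₂+8*e₂^2) * hZ1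
          · rcases mul_eq_zero.mp h'' with hZ2 | hZ3b
            · exact (lame_aux_shared_root e₁ e₂ z h12
                (by linear_combination hZ1) (by linear_combination hZ2)).elim
            · exact (lame_aux_shared_root e₁ (-e₁-e₂) z
                (fun h => h13 (by linear_combination h))
                (by linear_combination hZ1) (by linear_combination hZ3b)).elim
        · -- Z2 = 0
          have hD2 : (2*z-6*e₂) * ((z^2 - 6*e₁*z + (45*e₁^2 - 60*(e₁^2+e₁*e₂+e₂^2)))
              * (z^2 + 6*(e₁+e₂)*z + (45*(e₁+e₂)^2 - 60*(e₁^2+e₁*e₂+e₂^2)))) = 0 := by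
            linear_combination hD - ((2*z-6*e₁)
              * (z^2 + 6*(e₁+e₂)*z + (45*(e₁+e₂)^2 - 60*(e₁^2+e₁*e₂+e₂^2)))
              + (z^2 - 6*e₁*z + (45*e₁^2 - 60*(e₁^2+e₁*e₂+e₂^2)))
              * (2*z+6*(e₁+e₂)))*hZ2
          rcases mul_eq_zero.mp hD2 with hz2 | h''
          · have hz' : z = 3*e₂ := by linear_combination hz2/2
            subst hz'
            linear_combination ((-1:ℂ)/12) * (8*e₁^2+20*e₁*e₂+20*e₂^2)
              * (8*e₁^2-4*e₁*e₂+8*e₂^2) * hZ2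
          · rcases mul_eq_zero.mp h'' with hZ1 | hZ3b
            · exact (lame_aux_shared_root e₁ e₂ z h12
                (by linear_combination hZ1) (by linear_combination hZ2)).elim
            · exact (lame_aux_shared_root e₂ (-e₁-e₂) z
                (fun h => h23 (by linear_combination h))
                (by linear_combination hZ2) (by linear_combination hZ3b)).elim
      · -- Z3 = 0
        have hD3 : (2*z+6*(e₁+e₂)) * ((z^2 - 6*e₁*z + (45*e₁^2 - 60*(e₁^2+e₁*e₂+e₂^2)))
            * (z^2 - 6*e₂*z + (45*e₂^2 - 60*(e₁^2+e₁*e₂+e₂^2)))) = 0 := by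
          linear_combination hD - ((2*z-6*e₁)
            * (z^2 - 6*e₂*z + (45*e₂^2 - 60*(e₁^2+e₁*e₂+e₂^2)))
            + (z^2 - 6*e₁*z + (45*e₁^2 - 60*(e₁^2+e₁*e₂+e₂^2)))
            * (2*z-6*e₂))*hZ3
        rcases mul_eq_zero.mp hD3 with hz3 | h''
        · have hz' : z = -3*(e₁+e₂) := by linear_combination hz3/2
          subst hz'
          linear_combination ((-1:ℂ)/12) * (8*e₁^2+20*e₁*e₂+20*e₂^2)
            * (20*e₁^2+20*e₁*e₂+8*e₂^2) * hZ3
        · rcases mul_eq_zero.mp h'' with hZ1 | hZ2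
          · exact (lame_aux_shared_root e₁ (-e₁-e₂) z
              (fun h => h13 (by linear_combination h))
              (by linear_combination hZ1) (by linear_combination hZ3)).elim
          · exact (lame_aux_shared_root e₂ (-e₁-e₂) z
              (fun h => h23 (by linear_combination h))
              (by linear_combination hZ2) (by linear_combination hZ3)).elim
    · -- 5g₂³ = 27g₃² ⇒ repeated root
      intro hcond
      have hABC : (8*e₁^2+20*e₁*e₂+20*e₂^2) * ((20*e₁^2+20*e₁*e₂+8*e₂^2)
          * (8*e₁^2-4*e₁*e₂+8*e₂^2)) = 0 := by
        linear_combination 4*hcond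
      rcases mul_eq_zero.mp hABC with hA | hBC
      · refine ⟨3*e₁, ?_⟩
        apply dvd_mul_of_dvd_left
        apply dvd_mul_of_dvd_left
        refine dvd_of_eq ?_
        have hA' := congrArg (C : ℂ →+* ℂ[X]) hA
        simp only [map_ofNat, map_mul, map_add, map_sub, map_pow, map_neg, map_zero] at hA' ⊢
        linear_combination (3 : ℂ[X]) * hA'
      · rcases mul_eq_zero.mp hBC with hB | hCc
        · refine ⟨3*e₂, ?_⟩
          apply dvd_mul_of_dvd_left
          apply dvd_mul_of_dvd_right
          refine dvd_of_eq ?_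
          have hB' := congrArg (C : ℂ →+* ℂ[X]) hB
          simp only [map_ofNat, map_mul, map_add, map_sub, map_pow, map_neg, map_zero] at hB' ⊢
          linear_combination (3 : ℂ[X]) * hB'
        · refine ⟨-3*e₁-3*e₂, ?_⟩
          apply dvd_mul_of_dvd_right
          refine dvd_of_eq ?_
          have hC' := congrArg (C : ℂ →+* ℂ[X]) hCc
          simp only [map_ofNat, map_mul, map_add, map_sub, map_pow, map_neg, map_zero] at hC' ⊢
          linear_combination (3 : ℂ[X]) * hC'
  · -- the Klein invariant reformulation
    have key : 4 * (g₂ ^ 3 / (g₂ ^ 3 - 27 * g₃ ^ 2)) + 1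
        = (5*g₂^3 - 27*g₃^2)/(g₂^3 - 27*g₃^2) := by
      field_simp; ring
    rw [key, _root_.div_eq_zero_iff]
    constructor
    · intro h; exact Or.inl (by linear_combination h)
    · rintro (h | h)
      · linear_combination h
      · exact absurd h hΔ
end

section
/- Let g₂, g₃ ∈ ℂ, let U ⊆ ℂ be open, and let x₀, y₀ ∈ ℂ satisfy y₀² = 4x₀³ − g₂x₀ − g₃ with x₀ ∉ U. Let g : U → ℂ be differentiable with g(x)² = 4x³ − g₂x − g₃ and g(x) ≠ 0 for all x ∈ U, and let Ψ : U → ℂ be differentiable and satisfy the first-order equation Ψ'(x) = [(g(x) + y₀)/(2(x − x₀)g(x))]·Ψ(x) on U. Then Ψ is twice differentiable on U and satisfies the ℓ=1 algebraic Lamé equation f(x)Ψ''(x) + (1/2)f'(x)Ψ'(x) = (2x + x₀)Ψ(x) for all x ∈ U, where f(x) = 4x³ − g₂x − g₃. That is, the fundamental function Φ(x, y; x₀, y₀) = exp[(1/2)∫((y + y₀)/(x − x₀)) dx/y] solves the ℓ=1 Lamé equation with spectral parameter B = x₀. -/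
/-!
Writing `Ψ' = qΨ` with `q = (g + y₀)/(2(x − x₀)g)`, the Lamé equation becomes the Riccati
equation `f(q' + q²) + ½ f' q = 2x + x₀`. After clearing denominators, using `g² = f` and
`2gg' = f'`, this is the identity `f(x₀) − f(x) + (x − x₀) f'(x) = 4(x − x₀)²(2x + x₀)`, i.e.
Taylor's formula for the cubic `f` at `x`, evaluated at `x₀`, with `y₀² = f(x₀)`.
-/

open Filter Topology

section

variable {𝕜 : Type*} [NontriviallyNormedField 𝕜]

theorem hasDerivAt_deriv_of_deriv_eventuallyEq_mul {Ψ q : 𝕜 → 𝕜} {x q' : 𝕜}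
    (hΨ : DifferentiableAt 𝕜 Ψ x) (hq : HasDerivAt q q' x)
    (h : deriv Ψ =ᶠ[𝓝 x] fun t ↦ q t * Ψ t) :
    HasDerivAt (deriv Ψ) ((q' + q x ^ 2) * Ψ x) x := by
  have := (hq.mul hΨ.hasDerivAt).congr_of_eventuallyEq h
  rwa [h.eq_of_nhds, show q' * Ψ x + q x * (q x * Ψ x) = (q' + q x ^ 2) * Ψ x by ring] at this

theorem two_mul_mul_deriv_eq_of_sq_eventuallyEq {g F : 𝕜 → 𝕜} {x F' : 𝕜}
    (hg : DifferentiableAt 𝕜 g x) (hF : HasDerivAt F F' x)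
    (h : (fun t ↦ g t ^ 2) =ᶠ[𝓝 x] F) : 2 * g x * deriv g x = F' := by
  have := (hg.hasDerivAt.pow 2).congr_of_eventuallyEq h.symm
  simpa [mul_comm] using this.unique hF

theorem hasDerivAt_add_const_div_two_mul_sub_mul {g : 𝕜 → 𝕜} {x x₀ y₀ D : 𝕜}
    (hg : HasDerivAt g D x) (hden : 2 * (x - x₀) * g x ≠ 0) :
    HasDerivAt (fun t ↦ (g t + y₀) / (2 * (t - x₀) * g t))
      ((D * (2 * (x - x₀) * g x) - (g x + y₀) * (2 * g x + 2 * (x - x₀) * D))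
        / (2 * (x - x₀) * g x) ^ 2) x := by
  have hlin : HasDerivAt (fun t ↦ 2 * (t - x₀)) 2 x := by
    simpa using ((hasDerivAt_id x).sub_const x₀).const_mul 2
  exact (hg.add_const y₀).div (hlin.mul hg) hden

end

theorem hasDerivAt_weierstrass_cubic (g₂ g₃ x : ℂ) :
    HasDerivAt (fun t ↦ 4 * t ^ 3 - g₂ * t - g₃) (12 * x ^ 2 - g₂) x :=
  ((((hasDerivAt_pow 3 x).const_mul 4).fun_sub ((hasDerivAt_id' x).const_mul g₂)).sub_const
    g₃).congr_deriv (by norm_num; ring)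

theorem lame_l1_riccati {K : Type*} [Field K] [CharZero K] {g₂ g₃ x x₀ y₀ G D : K}
    (hx : x ≠ x₀) (hG : G ≠ 0) (hG2 : G ^ 2 = 4 * x ^ 3 - g₂ * x - g₃)
    (hD : 2 * G * D = 12 * x ^ 2 - g₂) (hy₀ : y₀ ^ 2 = 4 * x₀ ^ 3 - g₂ * x₀ - g₃) :
    (4 * x ^ 3 - g₂ * x - g₃)
        * ((D * (2 * (x - x₀) * G) - (G + y₀) * (2 * G + 2 * (x - x₀) * D))
            / (2 * (x - x₀) * G) ^ 2 + ((G + y₀) / (2 * (x - x₀) * G)) ^ 2)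
      + 1 / 2 * (12 * x ^ 2 - g₂) * ((G + y₀) / (2 * (x - x₀) * G))
      = 2 * x + x₀ := by
  have hu : x - x₀ ≠ 0 := sub_ne_zero.mpr hx
  rw [← hG2, ← hD]
  field_simp
  linear_combination hy₀ - hG2 + (x - x₀) * hD

/-- Let `y₀² = 4x₀³ − g₂x₀ − g₃` with `x₀ ∉ U`, `U ⊆ ℂ` open.  Let
`g` be differentiable on `U` with `g(x)² = 4x³ − g₂x − g₃` and `g(x) ≠ 0` (a branch of
`y` on `U`), and let `Ψ` be differentiable on `U` with
`Ψ'(x) = [(g(x) + y₀)/(2(x − x₀)g(x))]·Ψ(x)`.  Then `Ψ` is twice differentiable on `U`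
and satisfies the ℓ=1 algebraic Lamé equation
`f(x)Ψ''(x) + (1/2)f'(x)Ψ'(x) = (2x + x₀)Ψ(x)` on `U`, where `f(x) = 4x³ − g₂x − g₃`:
the fundamental function `Φ(x, y; x₀, y₀)` solves the ℓ=1 Lamé equation with spectral
parameter `B = x₀`. -/
theorem lame_l1_fundamental_function_solves (g₂ g₃ x₀ y₀ : ℂ) (U : Set ℂ)
    (hU : IsOpen U) (hx₀ : x₀ ∉ U)
    (hy₀ : y₀ ^ 2 = 4 * x₀ ^ 3 - g₂ * x₀ - g₃)
    (g Ψ : ℂ → ℂ)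
    (hg : ∀ x ∈ U, DifferentiableAt ℂ g x)
    (hgf : ∀ x ∈ U, g x ^ 2 = 4 * x ^ 3 - g₂ * x - g₃)
    (hgne : ∀ x ∈ U, g x ≠ 0)
    (hΨ : ∀ x ∈ U, DifferentiableAt ℂ Ψ x)
    (hΨ' : ∀ x ∈ U, deriv Ψ x = (g x + y₀) / (2 * (x - x₀) * g x) * Ψ x) :
    ∀ x ∈ U, DifferentiableAt ℂ (deriv Ψ) x ∧
      (4 * x ^ 3 - g₂ * x - g₃) * deriv (deriv Ψ) x
          + (1 / 2) * (12 * x ^ 2 - g₂) * deriv Ψ x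
        = (2 * x + x₀) * Ψ x := by
  intro x hx
  have hxx₀ : x ≠ x₀ := fun h ↦ hx₀ (h ▸ hx)
  have hUx : U ∈ 𝓝 x := hU.mem_nhds hx
  have hgD : 2 * g x * deriv g x = 12 * x ^ 2 - g₂ :=
    two_mul_mul_deriv_eq_of_sq_eventuallyEq (hg x hx) (hasDerivAt_weierstrass_cubic g₂ g₃ x)
      (eventually_of_mem hUx hgf)
  have hden : 2 * (x - x₀) * g x ≠ 0 := by simp [sub_ne_zero.mpr hxx₀, hgne x hx]
  have hΨ'' := hasDerivAt_deriv_of_deriv_eventuallyEq_mul (hΨ x hx)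
    (hasDerivAt_add_const_div_two_mul_sub_mul (hg x hx).hasDerivAt (y₀ := y₀) hden)
    (eventually_of_mem hUx hΨ')
  refine ⟨hΨ''.differentiableAt, ?_⟩
  rw [hΨ''.deriv, hΨ' x hx]
  linear_combination Ψ x * lame_l1_riccati hxx₀ (hgne x hx) (hgf x hx) hgD hy₀
end

section
/- Let g₂, g₃, B ∈ ℂ and let f(X) = 4X³ − g₂X − g₃ ∈ ℂ[X]. The polynomial D(X) = X − B/18 satisfies the ℓ=5 equation f·D'' + (3/2)f'·D' + (1/2)f''·D = (30X + B)·D in ℂ[X] if and only if B² = 27g₂. Equivalently, the values of B admitting the fourth-species Lamé polynomial solution Ψ = (x − B/18)·y of the ℓ=5 Lamé equation are exactly the roots of the Type-I spectral polynomial L₅^I(B) = B² − 27g₂. -/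
/-!
For linear `D = X - c` the Lamé operator reduces to `(3/2) f' + (1/2) f'' (X - c)`, so with
`f = 4X³ - g₂X - g₃` both sides are quadratics. The choice `c = B/18` already matches their
`X²` and `X` coefficients, and the constant terms differ by `(B² - 27g₂)/18`.
-/

open Polynomial

section
variable {K : Type*} [Field K]

noncomputable def weierstrassCubic (g₂ g₃ : K) : K[X] :=
  4 * X ^ 3 - C g₂ * X - C g₃

/-- The operator `D ↦ f D'' + (3/2) f' D' + (1/2) f'' D`, i.e. `(y d/dx)²` acting on `D(x)·y`
for `y² = f(x)`. -/
noncomputable def lameOperator (f D : K[X]) : K[X] :=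
  f * derivative (derivative D) + C (3 / 2 : K) * derivative f * derivative D
    + C (1 / 2 : K) * derivative (derivative f) * D

theorem lameOperator_X_sub_C (f : K[X]) (c : K) :
    lameOperator f (X - C c) =
      C (3 / 2 : K) * derivative f + C (1 / 2 : K) * derivative (derivative f) * (X - C c) := by
  simp [lameOperator]

theorem derivative_weierstrassCubic (g₂ g₃ : K) :
    derivative (weierstrassCubic g₂ g₃) = 12 * X ^ 2 - C g₂ := by
  simp only [weierstrassCubic, derivative_sub, derivative_mul, derivative_C, derivative_X,
    derivative_X_pow, derivative_ofNat, map_natCast]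
  ring

theorem derivative_derivative_weierstrassCubic (g₂ g₃ : K) :
    derivative (derivative (weierstrassCubic g₂ g₃)) = 24 * X := by
  rw [derivative_weierstrassCubic]
  simp only [derivative_sub, derivative_mul, derivative_C, derivative_X_pow, derivative_ofNat,
    map_natCast]
  ring

theorem lameOperator_weierstrassCubic_sub [CharZero K] (g₂ g₃ B : K) :
    lameOperator (weierstrassCubic g₂ g₃) (X - C (B / 18))
      - (30 * X + C B) * (X - C (B / 18)) = C ((B ^ 2 - 27 * g₂) / 18) := by
  rw [lameOperator_X_sub_C, derivative_derivative_weierstrassCubic, derivative_weierstrassCubic]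
  apply Polynomial.funext
  intro x
  simp only [eval_sub, eval_add, eval_mul, eval_C, eval_X, eval_pow, eval_ofNat]
  ring

end

/-- Let `f(X) = 4X³ − g₂X − g₃`.  The polynomial `D(X) = X − B/18`
satisfies the ℓ=5 equation `f·D'' + (3/2)f'·D' + (1/2)f''·D = (30X + B)·D` in `ℂ[X]`
if and only if `B² = 27g₂`: the values of `B` admitting the fourth-species Lamé
polynomial solution `Ψ = (x − B/18)·y` of the ℓ=5 Lamé equation are exactly the roots
of the Type-I spectral polynomial `L₅^I(B) = B² − 27g₂`. -/
theorem lame_l5_typeI_spectral (g₂ g₃ B : ℂ) :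
    ((4 * X ^ 3 - C g₂ * X - C g₃) * derivative (derivative (X - C (B / 18)))
        + C (3 / 2 : ℂ) * derivative (4 * X ^ 3 - C g₂ * X - C g₃)
          * derivative (X - C (B / 18))
        + C (1 / 2 : ℂ) * derivative (derivative (4 * X ^ 3 - C g₂ * X - C g₃))
          * (X - C (B / 18))
      = (30 * X + C B) * (X - C (B / 18))) ↔ B ^ 2 = 27 * g₂ := by
  change lameOperator (weierstrassCubic g₂ g₃) _ = _ ↔ _
  rw [← sub_eq_zero, lameOperator_weierstrassCubic_sub, C_eq_zero, div_eq_zero_iff, sub_eq_zero]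
  norm_num
end
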